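/- The category FPCM of trace monoids and basic homomorphisms is complete, i.e., has all small limits. -/

import Mathlib

open CategoryTheory

/-- The elementary commutation relation on words generated by an independence relation. -/
def traceRel (E : Type) (I : Set (E × E)) : FreeMonoid E → FreeMonoid E → Prop :=
  fun x y => ∃ a b : E, (a, b) ∈ I ∧ x = FreeMonoid.of a * FreeMonoid.of b ∧
    y = FreeMonoid.of b * FreeMonoid.of a

/-- The congruence on the free monoid generated by commutation of independent pairs. -/
def traceCon (E : Type) (I : Set (E × E)) : Con (FreeMonoid E) := conGen (traceRel E I)

/-- The trace monoid `M(E,I)`. -/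
abbrev TraceMonoid (E : Type) (I : Set (E × E)) : Type := (traceCon E I).Quotient

/-- The canonical projection from words to traces. -/
def trcMk {E : Type} {I : Set (E × E)} : FreeMonoid E →* TraceMonoid E I :=
  (traceCon E I).mk'

/-- The generator of the trace monoid corresponding to an event `e`. -/
def trc {E : Type} {I : Set (E × E)} (e : E) : TraceMonoid E I :=
  trcMk (FreeMonoid.of e)

/-- `I` is an independence relation: irreflexive and symmetric. -/
structure IsIndep {E : Type} (I : Set (E × E)) : Prop where
  irrefl : ∀ a : E, (a, a) ∉ I
  symm : ∀ a b : E, (a, b) ∈ I → (b, a) ∈ I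

/-- A homomorphism of trace monoids is basic if it sends generators to generators or to `1`. -/
def IsBasic {E E' : Type} {I : Set (E × E)} {I' : Set (E' × E')}
    (f : TraceMonoid E I →* TraceMonoid E' I') : Prop :=
  ∀ e : E, (∃ e' : E', f (trc e) = trc e') ∨ f (trc e) = 1

/-- A basic homomorphism preserves independence. -/
def IsIndepPres {E E' : Type} {I : Set (E × E)} {I' : Set (E' × E')}
    (f : TraceMonoid E I →* TraceMonoid E' I') : Prop :=
  ∀ a b : E, (a, b) ∈ I → f (trc a) ≠ f (trc b) ∨ (f (trc a) = 1 ∧ f (trc b) = 1)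

/-- The monoid homomorphism out of a trace monoid induced by a map on generators whose
images commute at independent pairs. -/
def liftHom {E : Type} {I : Set (E × E)} {N : Type*} [Monoid N] (φ : E → N)
    (hφ : ∀ a b : E, (a, b) ∈ I → φ a * φ b = φ b * φ a) : TraceMonoid E I →* N :=
  (traceCon E I).lift (FreeMonoid.lift φ) (by
    apply Con.conGen_le.2
    rintro x y ⟨a, b, hab, rfl, rfl⟩
    rw [Con.ker_rel]
    simp only [map_mul, FreeMonoid.lift_eval_of]
    exact hφ a b hab)

@[simp] theorem liftHom_trc {E : Type} {I : Set (E × E)} {N : Type*} [Monoid N] (φ : E → N)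
    (hφ : ∀ a b : E, (a, b) ∈ I → φ a * φ b = φ b * φ a) (e : E) :
    liftHom φ hφ (trc (I := I) e) = φ e := by
  show (traceCon E I).lift _ _ ((traceCon E I).mk' (FreeMonoid.of e)) = φ e
  exact (Con.lift_mk' _ _).trans (by simp)

theorem trc_comm {E : Type} {I : Set (E × E)} {a b : E} (h : (a, b) ∈ I) :
    (trc a : TraceMonoid E I) * trc b = trc b * trc a := by
  show trcMk (FreeMonoid.of a) * trcMk (FreeMonoid.of b) =
    trcMk (FreeMonoid.of b) * trcMk (FreeMonoid.of a)
  rw [← map_mul, ← map_mul]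
  exact (Con.eq _).2 (ConGen.Rel.of _ _ ⟨a, b, h, rfl, rfl⟩)

theorem isBasic_id {E : Type} {I : Set (E × E)} :
    IsBasic (MonoidHom.id (TraceMonoid E I)) := fun e => Or.inl ⟨e, rfl⟩

theorem isBasic_comp {E₁ E₂ E₃ : Type} {I₁ : Set (E₁ × E₁)} {I₂ : Set (E₂ × E₂)}
    {I₃ : Set (E₃ × E₃)} {f : TraceMonoid E₁ I₁ →* TraceMonoid E₂ I₂}
    {g : TraceMonoid E₂ I₂ →* TraceMonoid E₃ I₃} (hf : IsBasic f) (hg : IsBasic g) :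
    IsBasic (g.comp f) := by
  intro e
  rcases hf e with ⟨e', he⟩ | he
  · rcases hg e' with ⟨e'', he''⟩ | he''
    · exact Or.inl ⟨e'', by simp [MonoidHom.comp_apply, he, he'']⟩
    · exact Or.inr (by simp [MonoidHom.comp_apply, he, he''])
  · exact Or.inr (by simp [MonoidHom.comp_apply, he])
/-- An object of the category `FPCM`: a set of events with an independence relation. -/
structure FPCMObj where
  E : Type
  I : Set (E × E)
  indep : IsIndep I

/-- The category `FPCM` of trace monoids and basic homomorphisms. -/
instance : Category FPCMObj where
  Hom X Y := {f : TraceMonoid X.E X.I →* TraceMonoid Y.E Y.I // IsBasic f}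
  id _ := ⟨MonoidHom.id _, isBasic_id⟩
  comp f g := ⟨g.1.comp f.1, isBasic_comp f.2 g.2⟩
  id_comp _ := Subtype.ext (MonoidHom.comp_id _)
  comp_id _ := Subtype.ext (MonoidHom.id_comp _)
  assoc _ _ _ := Subtype.ext rfl

/-!
The limit of `F : J ⥤ FPCM` is built on the generators of a would-be limit: its letters are the
families `(x_j)` in `∏ⱼ M(E_j, I_j)` that are compatible along `F`, have every component a
generator or `1`, and are not identically `1`; two letters are independent when they are
distinct and commute componentwise. A basic homomorphism sends a letter to a letter or to `1`,
and such an element of the limit is recovered from its projections, which gives uniqueness of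
the mediating morphism; its existence comes from sending a letter `d` to the family of its
images under the cone legs (or to `1` if that family is trivial).
-/

section TraceMonoid

variable {E : Type} {I : Set (E × E)}

theorem trace_hom_ext {N : Type*} [Monoid N] {f g : TraceMonoid E I →* N}
    (h : ∀ e, f (trc e) = g (trc e)) : f = g :=
  Con.lift_funext f g fun w =>
    DFunLike.congr_fun (FreeMonoid.hom_eq (f := f.comp trcMk) (g := g.comp trcMk) h) w

def IsGenOrOne (x : TraceMonoid E I) : Prop := (∃ e, x = trc e) ∨ x = 1

theorem isGenOrOne_one : IsGenOrOne (1 : TraceMonoid E I) := Or.inr rfl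

theorem isGenOrOne_trc (e : E) : IsGenOrOne (trc e : TraceMonoid E I) := Or.inl ⟨e, rfl⟩

end TraceMonoid

namespace FPCMLimit

open CategoryTheory.Limits

variable {J : Type} [Category.{0} J] (F : J ⥤ FPCMObj)

def IsBasicSection (t : ∀ j, TraceMonoid (F.obj j).E (F.obj j).I) : Prop :=
  (∀ j, IsGenOrOne (t j)) ∧ ∀ ⦃j j' : J⦄ (u : j ⟶ j'), (F.map u).1 (t j) = t j'

abbrev limE : Type :=
  {t : ∀ j, TraceMonoid (F.obj j).E (F.obj j).I // IsBasicSection F t ∧ t ≠ 1}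

abbrev limI : Set (limE F × limE F) :=
  {p | p.1 ≠ p.2 ∧ Commute p.1.1 p.2.1}

theorem isIndep_limI : IsIndep (limI F) where
  irrefl _ h := h.1 rfl
  symm _ _ h := ⟨h.1.symm, h.2.symm⟩

abbrev limObj : FPCMObj := ⟨limE F, limI F, isIndep_limI F⟩

def projHom (j : J) : TraceMonoid (limE F) (limI F) →* TraceMonoid (F.obj j).E (F.obj j).I :=
  liftHom (fun t => t.1 j) fun _ _ h => congrFun h.2 j

@[simp] theorem projHom_trc (j : J) (t : limE F) : projHom F j (trc t) = t.1 j :=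
  liftHom_trc _ _ t

def proj (j : J) : limObj F ⟶ F.obj j :=
  ⟨projHom F j, fun t => projHom_trc F j t ▸ t.2.1.1 j⟩

def limCone : Cone F where
  pt := limObj F
  π.app := proj F
  π.naturality _ _ u := Subtype.ext <| trace_hom_ext fun t => by
    change projHom F _ (trc t) = (F.map u).1 (projHom F _ (trc t))
    simp only [projHom_trc]
    exact (t.2.1.2 u).symm

variable {F}

noncomputable def genOrOne (t : ∀ j, TraceMonoid (F.obj j).E (F.obj j).I)
    (ht : IsBasicSection F t) : TraceMonoid (limE F) (limI F) :=
  open Classical in if h : t = 1 then 1 else trc ⟨t, ht, h⟩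

theorem isGenOrOne_genOrOne {t : ∀ j, TraceMonoid (F.obj j).E (F.obj j).I}
    (ht : IsBasicSection F t) : IsGenOrOne (genOrOne t ht) := by
  unfold genOrOne
  split
  · exact isGenOrOne_one
  · exact isGenOrOne_trc _

theorem projHom_genOrOne {t : ∀ j, TraceMonoid (F.obj j).E (F.obj j).I}
    (ht : IsBasicSection F t) (j : J) : projHom F j (genOrOne t ht) = t j := by
  unfold genOrOne
  split
  case isTrue h => rw [map_one, h, Pi.one_apply]
  case isFalse => exact projHom_trc F j _

theorem commute_genOrOne {t s : ∀ j, TraceMonoid (F.obj j).E (F.obj j).I}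
    (ht : IsBasicSection F t) (hs : IsBasicSection F s) (hts : Commute t s) :
    Commute (genOrOne t ht) (genOrOne s hs) := by
  unfold genOrOne
  split
  · exact Commute.one_left _
  split
  · exact Commute.one_right _
  case isFalse.isFalse ht1 hs1 =>
    by_cases hst : (⟨t, ht, ht1⟩ : limE F) = ⟨s, hs, hs1⟩
    · rw [hst]
    · exact trc_comm ⟨hst, hts⟩

theorem isBasicSection_projHom {x : TraceMonoid (limE F) (limI F)} (hx : IsGenOrOne x) :
    IsBasicSection F fun j => projHom F j x := by
  refine ⟨fun j => ?_, fun _ _ u => congrArg (fun f => f.1 x) ((limCone F).w u)⟩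
  rcases hx with ⟨t, rfl⟩ | rfl
  · exact (proj F j).2 t
  · exact .inr (map_one (projHom F j))

theorem genOrOne_projHom {x : TraceMonoid (limE F) (limI F)} (hx : IsGenOrOne x) :
    genOrOne (fun j => projHom F j x) (isBasicSection_projHom hx) = x := by
  unfold genOrOne
  rcases hx with ⟨t, rfl⟩ | rfl
  · simp only [projHom_trc]
    exact dif_neg t.2.2
  · simp only [map_one]
    exact dif_pos rfl

theorem eq_of_projHom_eq {x y : TraceMonoid (limE F) (limI F)} (hx : IsGenOrOne x)
    (hy : IsGenOrOne y) (hxy : ∀ j, projHom F j x = projHom F j y) : x = y :=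
  (genOrOne_projHom hx).symm.trans <| Eq.trans (by congr 1; exact funext hxy) (genOrOne_projHom hy)

section Lift

variable (c : Cone F)

def legImages (d : c.pt.E) : ∀ j, TraceMonoid (F.obj j).E (F.obj j).I :=
  fun j => (c.π.app j).1 (trc d)

theorem isBasicSection_legImages (d : c.pt.E) : IsBasicSection F (legImages c d) :=
  ⟨fun j => (c.π.app j).2 d, fun _ _ u => congrArg (fun f => f.1 (trc d)) (c.w u)⟩

theorem commute_legImages {a b : c.pt.E} (hab : (a, b) ∈ c.pt.I) :
    Commute (legImages c a) (legImages c b) :=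
  funext fun j => by simp only [legImages, Pi.mul_apply, ← map_mul, trc_comm hab]

noncomputable def liftMonoidHom : TraceMonoid c.pt.E c.pt.I →* TraceMonoid (limE F) (limI F) :=
  liftHom (fun d => genOrOne (legImages c d) (isBasicSection_legImages c d)) fun _ _ hab =>
    (commute_genOrOne _ _ (commute_legImages c hab)).eq

theorem isBasic_liftMonoidHom : IsBasic (liftMonoidHom c) := fun d => by
  rw [liftMonoidHom, liftHom_trc]
  exact isGenOrOne_genOrOne _

noncomputable def lift : c.pt ⟶ limObj F := ⟨liftMonoidHom c, isBasic_liftMonoidHom c⟩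

theorem lift_proj (j : J) : lift c ≫ proj F j = c.π.app j :=
  Subtype.ext <| trace_hom_ext fun d => by
    change projHom F j (liftMonoidHom c (trc d)) = _
    rw [liftMonoidHom, liftHom_trc, projHom_genOrOne]
    rfl

end Lift

variable (F) in
noncomputable def isLimitLimCone : IsLimit (limCone F) where
  lift := lift
  fac := lift_proj
  uniq c m hm := Subtype.ext <| trace_hom_ext fun d =>
    eq_of_projHom_eq (m.2 d) (isBasic_liftMonoidHom c d) fun j =>
      congrArg (fun f => f.1 (trc d)) ((hm j).trans (lift_proj c j).symm)

end FPCMLimit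

open FPCMLimit in
/-- The category `FPCM` of trace monoids and basic homomorphisms is complete. -/
theorem fpcm_hasLimits : CategoryTheory.Limits.HasLimits FPCMObj :=
  ⟨fun _ _ => ⟨fun F => .mk ⟨limCone F, isLimitLimCone F⟩⟩⟩
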